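/- Let C : Fin d → Fin d → Fin d → ℝ be antisymmetric in its two upper indices. Let A : (Fin d → ℝ) → (Fin d → ℝ) be twice continuously differentiable, E : (Fin d → ℝ) → (Fin d → ℝ) be continuously differentiable, Γ : (Fin d → ℝ) → Matrix (Fin d) (Fin d) ℝ be continuously differentiable, and f : (Fin d → ℝ) → ℝ be continuously differentiable with compact support. Then ∫_{ℝ^d} Σ_{μ,ν} E^μ(x)·(Γ(x)^ν_μ + Σ_{σ,ξ} x_σ·C^{ξν}_σ·∂_ξ A_μ(x))·∂_ν f(x) dx = −∫_{ℝ^d} ( Σ_{μ,ν} ∂_ν( y ↦ Γ(y)^ν_μ·E^μ(y) )(x) + Σ_μ {A_μ, E^μ}(x) + Σ_{μ,ξ} (Σ_ν C^{ξν}_ν)·∂_ξ A_μ(x)·E^μ(x) )·f(x) dx. -/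

import Mathlib

/-!
Integrating by parts in each term against `∂_ν f` (no boundary terms, since `f` has compact
support) moves the derivative onto `E^μ (Γ^ν_μ + X^ν)`, where `X^ν = Σ x_σ C^{ξν}_σ ∂_ξ A_μ`
is the Hamiltonian vector field `{A_μ, x_ν}`. By the Leibniz rule, `Σ_ν X^ν ∂_ν E^μ` is the
bracket `{A_μ, E^μ}`, and the divergence of `X` reduces to `Σ_ξ (Σ_ν C^{ξν}_ν) ∂_ξ A_μ`:
its second-order part contracts the antisymmetric `C` with the symmetric Hessian of `A_μ`.
-/

open MeasureTheory

/-- Partial derivative in the `μ`-th coordinate direction. -/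
noncomputable def pd {d : ℕ} (μ : Fin d) (g : (Fin d → ℝ) → ℝ) (x : Fin d → ℝ) : ℝ :=
  fderiv ℝ g x (Pi.single μ 1)

/-- The Lie-algebra-type Poisson bracket `{g,h}(x) = Σ x_λ C^{μν}_λ ∂_μ g ∂_ν h`. -/
noncomputable def pb {d : ℕ} (C : Fin d → Fin d → Fin d → ℝ) (g h : (Fin d → ℝ) → ℝ)
    (x : Fin d → ℝ) : ℝ :=
  ∑ lam, ∑ μ, ∑ ν, x lam * C μ ν lam * pd μ g x * pd ν h x

section PartialDerivative

variable {d : ℕ} {g h : (Fin d → ℝ) → ℝ} {x : Fin d → ℝ}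

theorem ContDiff.contDiff_pd {m n : WithTop ℕ∞} (hg : ContDiff ℝ n g) (hmn : m + 1 ≤ n)
    (ν : Fin d) : ContDiff ℝ m (pd ν g) :=
  (ContinuousLinearMap.apply ℝ ℝ (Pi.single ν 1 : Fin d → ℝ)).contDiff.comp
    (hg.fderiv_right hmn)

theorem ContDiff.continuous_pd (hg : ContDiff ℝ 1 g) (ν : Fin d) : Continuous (pd ν g) :=
  (hg.contDiff_pd (m := 0) (by simp) ν).continuous

theorem ContDiffAt.differentiableAt_pd (hg : ContDiffAt ℝ 2 g x) (ν : Fin d) :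
    DifferentiableAt ℝ (pd ν g) x :=
  ((ContinuousLinearMap.apply ℝ ℝ (Pi.single ν 1 : Fin d → ℝ)).contDiff.contDiffAt.comp x
    (hg.fderiv_right (m := 1) le_rfl)).differentiableAt one_ne_zero

theorem HasCompactSupport.pd (hg : HasCompactSupport g) (ν : Fin d) :
    HasCompactSupport (pd ν g) :=
  hg.fderiv_apply ℝ (Pi.single ν 1)

theorem pd_add (hg : DifferentiableAt ℝ g x) (hh : DifferentiableAt ℝ h x) (ν : Fin d) :
    pd ν (fun y => g y + h y) x = pd ν g x + pd ν h x := by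
  simp [pd, fderiv_fun_add hg hh]

theorem pd_mul (hg : DifferentiableAt ℝ g x) (hh : DifferentiableAt ℝ h x) (ν : Fin d) :
    pd ν (fun y => g y * h y) x = pd ν g x * h x + g x * pd ν h x := by
  simp only [pd, fderiv_fun_mul hg hh, add_apply, smul_apply, smul_eq_mul]
  ring

theorem pd_sum {ι : Type*} (s : Finset ι) {g : ι → (Fin d → ℝ) → ℝ}
    (hg : ∀ i ∈ s, DifferentiableAt ℝ (g i) x) (ν : Fin d) :
    pd ν (fun y => ∑ i ∈ s, g i y) x = ∑ i ∈ s, pd ν (g i) x := by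
  simp [pd, fderiv_fun_sum hg]

theorem pd_coord_mul_const_mul (hg : DifferentiableAt ℝ g x) (σ ν : Fin d) (c : ℝ) :
    pd ν (fun y => y σ * c * g y) x
      = (Pi.single ν 1 : Fin d → ℝ) σ * c * g x + x σ * c * pd ν g x := by
  have hcoord : HasFDerivAt (fun y : Fin d → ℝ => y σ * c) (c • ContinuousLinearMap.proj σ) x :=
    (hasFDerivAt_apply (𝕜 := ℝ) (F' := fun _ => ℝ) σ x).mul_const c
  rw [pd_mul hcoord.differentiableAt hg]
  simp [pd, hcoord.fderiv, mul_comm c]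

theorem pd_pd_comm (hg : ContDiffAt ℝ 2 g x) (ν ξ : Fin d) :
    pd ν (pd ξ g) x = pd ξ (pd ν g) x := by
  have hdf : DifferentiableAt ℝ (fderiv ℝ g) x :=
    (hg.fderiv_right (m := 1) le_rfl).differentiableAt one_ne_zero
  have hpd : ∀ ν ξ : Fin d,
      pd ν (pd ξ g) x = fderiv ℝ (fderiv ℝ g) x (Pi.single ν 1) (Pi.single ξ 1) := by
    intro ν ξ
    change fderiv ℝ (fun y => fderiv ℝ g y (Pi.single ξ 1)) x (Pi.single ν 1) = _
    simp [fderiv_clm_apply hdf (differentiableAt_const _)]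
  rw [hpd, hpd, (hg.isSymmSndFDerivAt (by simp)).eq]

end PartialDerivative

theorem Finset.sum_sum_mul_eq_zero_of_antisymm_of_symm {ι R : Type*} [Fintype ι]
    [CommRing R] [NoZeroDivisors R] [CharZero R] {c m : ι → ι → R}
    (hc : ∀ i j, c i j = -c j i) (hm : ∀ i j, m i j = m j i) :
    ∑ i, ∑ j, c i j * m i j = 0 := by
  refine CharZero.eq_neg_self_iff.mp ?_
  calc ∑ i, ∑ j, c i j * m i j = ∑ j, ∑ i, c i j * m i j := Finset.sum_comm
    _ = ∑ j, ∑ i, -(c j i * m j i) :=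
      Finset.sum_congr rfl fun j _ => Finset.sum_congr rfl fun i _ => by rw [hc, hm, neg_mul]
    _ = -∑ i, ∑ j, c i j * m i j := by simp only [Finset.sum_neg_distrib]

section HamiltonianField

variable {d : ℕ} (C : Fin d → Fin d → Fin d → ℝ)

noncomputable def hamiltonianField (a : (Fin d → ℝ) → ℝ) (ν : Fin d) (x : Fin d → ℝ) : ℝ :=
  ∑ σ, ∑ ξ, x σ * C ξ ν σ * pd ξ a x

variable {a : (Fin d → ℝ) → ℝ}

theorem pb_eq_sum_hamiltonianField_mul_pd (e : (Fin d → ℝ) → ℝ) (x : Fin d → ℝ) :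
    pb C a e x = ∑ ν, hamiltonianField C a ν x * pd ν e x := by
  simp only [pb, hamiltonianField, Finset.sum_mul]
  conv_rhs => rw [Finset.sum_comm]
  exact Finset.sum_congr rfl fun σ _ => Finset.sum_comm

theorem ContDiff.hamiltonianField {m n : WithTop ℕ∞} (ha : ContDiff ℝ n a) (hmn : m + 1 ≤ n)
    (ν : Fin d) : ContDiff ℝ m (hamiltonianField C a ν) := by
  unfold _root_.hamiltonianField
  have := fun ξ => ha.contDiff_pd hmn ξ
  fun_prop

theorem ContDiffAt.differentiableAt_hamiltonianField {x : Fin d → ℝ} (ha : ContDiffAt ℝ 2 a x)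
    (ν : Fin d) : DifferentiableAt ℝ (hamiltonianField C a ν) x := by
  unfold _root_.hamiltonianField
  have := ha.differentiableAt_pd
  fun_prop

theorem pd_hamiltonianField {x : Fin d → ℝ} (ha : ContDiffAt ℝ 2 a x) (ν : Fin d) :
    pd ν (hamiltonianField C a ν) x
      = ∑ ξ, C ξ ν ν * pd ξ a x + ∑ σ, x σ * ∑ ξ, C ξ ν σ * pd ν (pd ξ a) x := by
  have hpd := ha.differentiableAt_pd
  unfold hamiltonianField
  have hsummand : ∀ σ, pd ν (fun y => ∑ ξ, y σ * C ξ ν σ * pd ξ a y) x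
      = ∑ ξ, ((Pi.single ν 1 : Fin d → ℝ) σ * C ξ ν σ * pd ξ a x
          + x σ * C ξ ν σ * pd ν (pd ξ a) x) := fun σ => by
    rw [pd_sum _ (fun ξ _ => by fun_prop)]
    exact Finset.sum_congr rfl fun ξ _ => pd_coord_mul_const_mul (hpd ξ) σ ν _
  rw [pd_sum _ (fun σ _ => by fun_prop), Finset.sum_congr rfl fun σ _ => hsummand σ]
  simp only [Finset.sum_add_distrib, Finset.mul_sum, mul_assoc]
  congr 1
  rw [Finset.sum_comm]
  simp [Pi.single_apply]

theorem sum_pd_hamiltonianField (hC : ∀ μ ν lam, C μ ν lam = -C ν μ lam) {x : Fin d → ℝ}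
    (ha : ContDiffAt ℝ 2 a x) :
    ∑ ν, pd ν (hamiltonianField C a ν) x = ∑ ξ, (∑ ν, C ξ ν ν) * pd ξ a x := by
  have hsecond : ∑ ν, ∑ σ, x σ * ∑ ξ, C ξ ν σ * pd ν (pd ξ a) x = 0 := by
    rw [Finset.sum_comm]
    refine Finset.sum_eq_zero fun σ _ => ?_
    rw [← Finset.mul_sum, Finset.sum_sum_mul_eq_zero_of_antisymm_of_symm
      (fun ν ξ => hC ξ ν σ) (fun ν ξ => pd_pd_comm ha ν ξ), mul_zero]
  rw [Finset.sum_congr rfl fun ν _ => pd_hamiltonianField C ha ν, Finset.sum_add_distrib,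
    hsecond, add_zero, Finset.sum_comm]
  simp only [Finset.sum_mul]

theorem sum_pd_mul_add_hamiltonianField (hC : ∀ μ ν lam, C μ ν lam = -C ν μ lam)
    {e : (Fin d → ℝ) → ℝ} {γ : Fin d → (Fin d → ℝ) → ℝ} {x : Fin d → ℝ}
    (ha : ContDiffAt ℝ 2 a x) (he : DifferentiableAt ℝ e x)
    (hγ : ∀ ν, DifferentiableAt ℝ (γ ν) x) :
    ∑ ν, pd ν (fun y => e y * (γ ν y + hamiltonianField C a ν y)) x
      = ∑ ν, pd ν (fun y => γ ν y * e y) x + pb C a e x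
        + ∑ ξ, (∑ ν, C ξ ν ν) * pd ξ a x * e x := by
  have hX := ha.differentiableAt_hamiltonianField C
  have hleibniz : ∀ ν, pd ν (fun y => e y * (γ ν y + hamiltonianField C a ν y)) x
      = pd ν (fun y => γ ν y * e y) x + hamiltonianField C a ν x * pd ν e x
        + e x * pd ν (hamiltonianField C a ν) x := fun ν => by
    rw [pd_mul he ((hγ ν).fun_add (hX ν)), pd_add (hγ ν) (hX ν), pd_mul (hγ ν) he]
    ring
  rw [Finset.sum_congr rfl fun ν _ => hleibniz ν, Finset.sum_add_distrib, Finset.sum_add_distrib,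
    ← pb_eq_sum_hamiltonianField_mul_pd, ← Finset.mul_sum, sum_pd_hamiltonianField C hC ha,
    Finset.mul_sum]
  exact congrArg _ (Finset.sum_congr rfl fun ξ _ => by ring)

end HamiltonianField

section IntegrationByParts

variable {d : ℕ} {f : (Fin d → ℝ) → ℝ}

theorem integral_mul_pd_eq_neg_integral_pd_mul {g : (Fin d → ℝ) → ℝ} (hg : ContDiff ℝ 1 g)
    (hf : ContDiff ℝ 1 f) (hfs : HasCompactSupport f) (ν : Fin d) :
    ∫ x, g x * pd ν f x = -∫ x, pd ν g x * f x :=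
  integral_mul_fderiv_eq_neg_fderiv_mul_of_integrable
    (((hg.continuous_pd ν).mul hf.continuous).integrable_of_hasCompactSupport hfs.mul_left)
    ((hg.continuous.mul (hf.continuous_pd ν)).integrable_of_hasCompactSupport (hfs.pd ν).mul_left)
    ((hg.continuous.mul hf.continuous).integrable_of_hasCompactSupport hfs.mul_left)
    (fun x _ => hg.differentiable one_ne_zero x) (fun x _ => hf.differentiable one_ne_zero x)

theorem integral_sum_mul_pd_eq_neg_integral_sum_pd_mul {ι : Type*} [Fintype ι]
    {g : ι → (Fin d → ℝ) → ℝ} (ν : ι → Fin d) (hg : ∀ i, ContDiff ℝ 1 (g i))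
    (hf : ContDiff ℝ 1 f) (hfs : HasCompactSupport f) :
    ∫ x, ∑ i, g i x * pd (ν i) f x = -∫ x, (∑ i, pd (ν i) (g i) x) * f x := by
  have hint_left : ∀ i, Integrable fun x => g i x * pd (ν i) f x := fun i =>
    ((hg i).continuous.mul (hf.continuous_pd _)).integrable_of_hasCompactSupport
      (hfs.pd _).mul_left
  have hint_right : ∀ i, Integrable fun x => pd (ν i) (g i) x * f x := fun i =>
    (((hg i).continuous_pd _).mul hf.continuous).integrable_of_hasCompactSupport hfs.mul_left
  simp only [Finset.sum_mul]
  rw [integral_finsetSum _ fun i _ => hint_left i, integral_finsetSum _ fun i _ => hint_right i,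
    ← Finset.sum_neg_distrib]
  exact Finset.sum_congr rfl fun i _ =>
    integral_mul_pd_eq_neg_integral_pd_mul (hg i) hf hfs (ν i)

end IntegrationByParts

/-- Integration by parts identity behind the Noether identity of Lie-Poisson
electrodynamics (Eq. (ipropo) of the paper). -/
theorem noether_integration_by_parts {d : ℕ} (C : Fin d → Fin d → Fin d → ℝ)
    (hC : ∀ μ ν lam, C μ ν lam = - C ν μ lam)
    (A : (Fin d → ℝ) → (Fin d → ℝ)) (E : (Fin d → ℝ) → (Fin d → ℝ))
    (Γ : (Fin d → ℝ) → Matrix (Fin d) (Fin d) ℝ) (f : (Fin d → ℝ) → ℝ)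
    (hA : ContDiff ℝ 2 A) (hE : ContDiff ℝ 1 E)
    (hΓ : ∀ i j, ContDiff ℝ 1 (fun y => Γ y i j))
    (hf : ContDiff ℝ 1 f) (hfsupp : HasCompactSupport f) :
    ∫ x : Fin d → ℝ,
        ∑ μ, ∑ ν, E x μ * (Γ x ν μ + ∑ σ, ∑ ξ, x σ * C ξ ν σ * pd ξ (fun y => A y μ) x)
          * pd ν f x
      = - ∫ x : Fin d → ℝ,
          ((∑ μ, ∑ ν, pd ν (fun y => Γ y ν μ * E y μ) x)
            + (∑ μ, pb C (fun y => A y μ) (fun y => E y μ) x)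
            + ∑ μ, ∑ ξ, (∑ ν, C ξ ν ν) * pd ξ (fun y => A y μ) x * E x μ) * f x := by
  have hA2 : ∀ μ, ContDiff ℝ 2 (fun y => A y μ) := contDiff_pi.1 hA
  have hE1 : ∀ μ, ContDiff ℝ 1 (fun y => E y μ) := contDiff_pi.1 hE
  have hibp := integral_sum_mul_pd_eq_neg_integral_sum_pd_mul
    (g := fun p y => E y p.1 * (Γ y p.2 p.1 + hamiltonianField C (fun z => A z p.1) p.2 y))
    Prod.snd
    (fun p => (hE1 p.1).mul ((hΓ p.2 p.1).add ((hA2 p.1).hamiltonianField C (by norm_num) p.2)))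
    hf hfsupp
  simp only [Fintype.sum_prod_type] at hibp
  refine hibp.trans (congrArg Neg.neg (integral_congr_ae (Filter.Eventually.of_forall fun x => ?_)))
  simp only [← Finset.sum_add_distrib]
  exact congrArg (· * f x) (Finset.sum_congr rfl fun μ _ =>
    sum_pd_mul_add_hamiltonianField C hC (hA2 μ).contDiffAt
      ((hE1 μ).differentiable one_ne_zero x) fun ν => (hΓ ν μ).differentiable one_ne_zero x)
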